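/- Let σ > 0 and let μ satisfy μ₂(σ) < μ < μ₃(σ), where μ₂(σ) = 1/(σ + 4) and μ₃(σ) = (σ + 1)/(3σ + 4). Then the fully symmetric convergence–divergence game has exactly three equilibria in the unit square: {(x,y) ∈ [0,1] × [0,1] : F₁(x,y) = 0 and F₂(x,y) = 0} = {(1/2, 1/2), (1/2 + δ̃(σ,μ), 1/2 − δ̃(σ,μ)), (1/2 − δ̃(σ,μ), 1/2 + δ̃(σ,μ))}, where δ̃(σ,μ) = √(−(3σ² + 4σ)μ² − 2(σ² + 3σ + 2)μ + (σ + 1)²) / (2(σμ + σ + 1)). -/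

import Mathlib

/-!
Adding the two equilibrium equations gives `(x + y - 1) * Q(x, y) = 0`, and `Q < 0` on the unit
square as soon as `μ > μ₂(σ)`; so every equilibrium lies on the antidiagonal `y = 1 - x`.
There `F₁` factors as `2 (x - 1/2) (c x (1 - x) - μ (σ + 1))` with `c = σμ + σ + 1`, and
`δ̃` is exactly the half-distance between the roots of the second factor, which are real
precisely when `μ ≤ μ₃(σ)`.
-/

noncomputable def F1 (σ μ x y : ℝ) : ℝ :=
  ((1 - x) - μ) * x * (x + σ * x * (1 - y)) - (x - μ) * (1 - x) * ((1 - x) + σ * (1 - x) * y)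

noncomputable def F2 (σ μ x y : ℝ) : ℝ :=
  ((1 - y) - μ) * y * (y + σ * y * (1 - x)) - (y - μ) * (1 - y) * ((1 - y) + σ * (1 - y) * x)

noncomputable def deltaTilde (σ μ : ℝ) : ℝ :=
  Real.sqrt (-(3 * σ^2 + 4 * σ) * μ^2 - 2 * (σ^2 + 3 * σ + 2) * μ + (σ + 1)^2) /
    (2 * (σ * μ + σ + 1))

section Equations

variable (σ μ : ℝ)

theorem F2_eq_F1_swap (x y : ℝ) : F2 σ μ x y = F1 σ μ y x := by
  unfold F1 F2; ring

theorem F1_one_sub_one_sub (x y : ℝ) : F1 σ μ (1 - x) (1 - y) = -F1 σ μ x y := by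
  unfold F1; ring

theorem F1_add_F2 (x y : ℝ) :
    F1 σ μ x y + F2 σ μ x y = (x + y - 1) *
      (-2 * μ + (1 - σ * μ) * (x + y) * (2 - (x + y)) / 2
        - (3 + 2 * σ + σ * μ) * (x - y) ^ 2 / 2) := by
  unfold F1 F2; ring

theorem F1_antidiagonal (x : ℝ) :
    F1 σ μ x (1 - x) = 2 * (x - 1/2) * ((σ * μ + σ + 1) * (x * (1 - x)) - μ * (σ + 1)) := by
  unfold F1; ring

end Equations

/-- For `σ μ ≤ 1` the middle term is at most `(1 - σ μ) / 2`, otherwise it is nonpositive;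
either way `μ > 1 / (σ + 4)` makes the whole expression negative. -/
theorem F1_add_F2_cofactor_neg {σ μ s d : ℝ} (hσ : 0 ≤ σ) (hμ : 1 < (σ + 4) * μ)
    (hs₀ : 0 ≤ s) (hs₂ : s ≤ 2) :
    -2 * μ + (1 - σ * μ) * s * (2 - s) / 2 - (3 + 2 * σ + σ * μ) * d ^ 2 / 2 < 0 := by
  have hμ₀ : 0 < μ := by nlinarith
  have hd : 0 ≤ (3 + 2 * σ + σ * μ) * d ^ 2 := by positivity
  rcases le_or_gt (σ * μ) 1 with h | h
  · nlinarith [mul_nonneg (sub_nonneg.mpr h) (sq_nonneg (s - 1))]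
  · nlinarith [mul_nonneg (mul_nonneg (sub_pos.mpr h).le hs₀) (sub_nonneg.mpr hs₂)]

theorem add_eq_one_of_F1_eq_zero_of_F2_eq_zero {σ μ x y : ℝ} (hσ : 0 ≤ σ)
    (hμ : 1 < (σ + 4) * μ) (hx : x ∈ Set.Icc (0:ℝ) 1) (hy : y ∈ Set.Icc (0:ℝ) 1)
    (h₁ : F1 σ μ x y = 0) (h₂ : F2 σ μ x y = 0) : x + y = 1 := by
  have hprod := F1_add_F2 σ μ x y
  rw [h₁, h₂, add_zero, eq_comm, mul_eq_zero] at hprod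
  rcases hprod with h | h
  · linarith
  · exact absurd h
      (F1_add_F2_cofactor_neg hσ hμ (by linarith [hx.1, hy.1]) (by linarith [hx.2, hy.2])).ne

theorem equilibrium_iff_antidiagonal {σ μ : ℝ} (hσ : 0 ≤ σ) (hμ : 1 < (σ + 4) * μ)
    {p : ℝ × ℝ} (hp : p ∈ Set.Icc (0:ℝ) 1 ×ˢ Set.Icc (0:ℝ) 1) :
    (F1 σ μ p.1 p.2 = 0 ∧ F2 σ μ p.1 p.2 = 0) ↔
      (p.2 = 1 - p.1 ∧ F1 σ μ p.1 (1 - p.1) = 0) := by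
  obtain ⟨x, y⟩ := p
  dsimp only
  constructor
  · rintro ⟨h₁, h₂⟩
    obtain rfl : y = 1 - x := by
      linarith [add_eq_one_of_F1_eq_zero_of_F2_eq_zero hσ hμ hp.1 hp.2 h₁ h₂]
    exact ⟨rfl, h₁⟩
  · rintro ⟨rfl, h₁⟩
    have h₂ : F2 σ μ x (1 - x) = -F1 σ μ x (1 - x) := by
      rw [F2_eq_F1_swap, ← F1_one_sub_one_sub, sub_sub_cancel]
    exact ⟨h₁, by rw [h₂, h₁, neg_zero]⟩

section DeltaTilde

variable {σ μ : ℝ}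

theorem deltaTilde_nonneg (hc : 0 < σ * μ + σ + 1) : 0 ≤ deltaTilde σ μ := by
  unfold deltaTilde; positivity

theorem mul_deltaTilde_sq (hc : 0 < σ * μ + σ + 1) (hμ : μ * (3 * σ + 4) ≤ σ + 1) :
    (σ * μ + σ + 1) * deltaTilde σ μ ^ 2 = (σ * μ + σ + 1) / 4 - μ * (σ + 1) := by
  have hdisc : -(3 * σ^2 + 4 * σ) * μ^2 - 2 * (σ^2 + 3 * σ + 2) * μ + (σ + 1)^2
      = (σ * μ + σ + 1) * ((σ + 1) - μ * (3 * σ + 4)) := by ring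
  have hdisc₀ : 0 ≤ (σ * μ + σ + 1) * ((σ + 1) - μ * (3 * σ + 4)) :=
    mul_nonneg hc.le (by linarith)
  unfold deltaTilde
  rw [div_pow, hdisc, Real.sq_sqrt hdisc₀]
  generalize hcdef : σ * μ + σ + 1 = c at hc ⊢
  field_simp
  rw [← hcdef]; ring

theorem deltaTilde_le_half (hc : 0 < σ * μ + σ + 1) (hμσ : 0 ≤ μ * (σ + 1))
    (hμ : μ * (3 * σ + 4) ≤ σ + 1) : deltaTilde σ μ ≤ 1/2 := by
  have hsq : (σ * μ + σ + 1) * deltaTilde σ μ ^ 2 ≤ (σ * μ + σ + 1) * (1/2) ^ 2 := by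
    rw [mul_deltaTilde_sq hc hμ]; linarith
  exact (pow_le_pow_iff_left₀ (deltaTilde_nonneg hc) (by norm_num) two_ne_zero).mp
    (le_of_mul_le_mul_left hsq hc)

end DeltaTilde

theorem F1_antidiagonal_eq_zero_iff {σ μ δ x : ℝ} (hc : σ * μ + σ + 1 ≠ 0)
    (hδ : (σ * μ + σ + 1) * δ ^ 2 = (σ * μ + σ + 1) / 4 - μ * (σ + 1)) :
    F1 σ μ x (1 - x) = 0 ↔ x = 1/2 ∨ x = 1/2 + δ ∨ x = 1/2 - δ := by
  have hfac : F1 σ μ x (1 - x) =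
      -2 * (σ * μ + σ + 1) * ((x - 1/2) * ((x - (1/2 + δ)) * (x - (1/2 - δ)))) := by
    rw [F1_antidiagonal]; linear_combination (-2 * x + 1) * hδ
  simp only [hfac, mul_eq_zero, sub_eq_zero, hc, or_false]
  norm_num

theorem phase_II_three_equilibria (σ μ : ℝ) (hσ : 0 < σ)
    (hlo : 1 / (σ + 4) < μ) (hhi : μ < (σ + 1) / (3 * σ + 4)) :
    {p : ℝ × ℝ | p ∈ Set.Icc (0:ℝ) 1 ×ˢ Set.Icc (0:ℝ) 1 ∧
        F1 σ μ p.1 p.2 = 0 ∧ F2 σ μ p.1 p.2 = 0} =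
      {(1/2, 1/2),
       (1/2 + deltaTilde σ μ, 1/2 - deltaTilde σ μ),
       (1/2 - deltaTilde σ μ, 1/2 + deltaTilde σ μ)} := by
  have hlo' : 1 < (σ + 4) * μ := by rwa [div_lt_iff₀ (by linarith), mul_comm] at hlo
  have hhi' : μ * (3 * σ + 4) ≤ σ + 1 := (lt_div_iff₀ (by linarith)).mp hhi |>.le
  have hμ₀ : 0 < μ := lt_trans (by positivity) hlo
  have hc : 0 < σ * μ + σ + 1 := by positivity
  have hδ₀ := deltaTilde_nonneg hc
  have hδ₁ := deltaTilde_le_half hc (by positivity) hhi'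
  ext ⟨x, y⟩
  simp only [Set.mem_ofPred_eq]
  rw [and_congr_right (equilibrium_iff_antidiagonal hσ.le hlo'),
    F1_antidiagonal_eq_zero_iff hc.ne' (mul_deltaTilde_sq hc hhi')]
  simp only [Set.mem_insert_iff, Set.mem_singleton_iff, Set.mem_prod, Set.mem_Icc,
    Prod.mk.injEq]
  constructor
  · rintro ⟨-, rfl, rfl | rfl | rfl⟩
    · left; norm_num
    · right; left; constructor <;> ring
    · right; right; constructor <;> ring
  · rintro (⟨rfl, rfl⟩ | ⟨rfl, rfl⟩ | ⟨rfl, rfl⟩)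
    · norm_num
    · exact ⟨⟨⟨by linarith, by linarith⟩, by linarith, by linarith⟩, by ring,
        .inr (.inl rfl)⟩
    · exact ⟨⟨⟨by linarith, by linarith⟩, by linarith, by linarith⟩, by ring,
        .inr (.inr rfl)⟩
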